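/- arXiv:2506.11979 — 3 statements merged into one kernel-verified Lean document; each statement's English description precedes it below -/
import Mathlib

section
/- Let T be a simple graph with no cycles (a forest), G a connected simple graph, and f : V(G) → V(T) a function mapping adjacent vertices of G to adjacent vertices of T. If a and b are adjacent vertices of T and both a and b lie in the image of f, then there exist adjacent vertices u, v of G with f(u) = a and f(v) = b. -/
/-! Every edge `ab` of a forest is a bridge, so the image of a walk of `G` from a preimage of `a`
to a preimage of `b` must traverse `ab`; the edge of the walk mapped onto it, suitably
oriented, is the required pair. -/

namespace SimpleGraph

theorem exists_adj_map_eq_of_isBridge {V W : Type*} {G : SimpleGraph V} {T : SimpleGraph W}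
    (F : G →g T) (hG : G.Preconnected) {a b : W} (hab : T.IsBridge s(a, b))
    (ha : a ∈ Set.range F) (hb : b ∈ Set.range F) :
    ∃ u v, G.Adj u v ∧ F u = a ∧ F v = b := by
  obtain ⟨x, rfl⟩ := ha
  obtain ⟨y, rfl⟩ := hb
  obtain ⟨p⟩ := hG x y
  have hmem := isBridge_iff_forall_walk_mem_edges.mp hab (p.map F)
  rw [Walk.edges_map, List.mem_map] at hmem
  obtain ⟨⟨u, v⟩, he, hmap⟩ := hmem
  have huv : G.Adj u v := p.adj_of_mem_edges he
  rw [Sym2.map_mk, Sym2.eq_iff] at hmap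
  rcases hmap with ⟨hu, hv⟩ | ⟨hv, hu⟩
  · exact ⟨u, v, huv, hu, hv⟩
  · exact ⟨v, u, huv.symm, hu, hv⟩

end SimpleGraph

theorem stmt2 {VT VG : Type*} (T : SimpleGraph VT) (G : SimpleGraph VG)
    (hT : T.IsAcyclic) (hG : G.Connected) (f : VG → VT)
    (hf : ∀ u v, G.Adj u v → T.Adj (f u) (f v))
    (a b : VT) (hab : T.Adj a b) (ha : a ∈ Set.range f) (hb : b ∈ Set.range f) :
    ∃ u v, G.Adj u v ∧ f u = a ∧ f v = b :=
  SimpleGraph.exists_adj_map_eq_of_isBridge ⟨f, hf _ _⟩ hG.preconnected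
    (SimpleGraph.isAcyclic_iff_forall_adj_isBridge.mp hT hab) ha hb
end

section
/- Let g, h : ℝ → ℝ with g upper semicontinuous, h lower semicontinuous, and g(y) ≤ h(y) for all y ∈ ℝ. Then there exists a continuous function f : ℝ → ℝ with g(y) ≤ f(y) ≤ h(y) for all y ∈ ℝ. -/
/-!
By a partition of unity, a usc `G` strictly below a lsc `H` admits a continuous function strictly
in between; applied to `G - ε < H + ε` this gives continuous `ε`-approximate insertions.
Iterating, each approximation `fₙ` (with `εₙ = 1 / 2 ^ n`) tightens the pair to
`G ⊔ (fₙ - εₙ) ≤ H ⊓ (fₙ + εₙ)`, which is again usc/lsc, so the next approximation stays within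
`εₙ + εₙ₊₁` of `fₙ`. The `fₙ` converge uniformly, and their limit lies between `G` and `H`.
-/

open Set Filter Topology

theorem exists_continuous_tendsto_of_dist_le_geometric_two {X β : Type*} [TopologicalSpace X]
    [PseudoMetricSpace β] [CompleteSpace β] {u : ℕ → X → β} (hu : ∀ n, Continuous (u n))
    {C : ℝ} (hdist : ∀ n x, dist (u n x) (u (n + 1) x) ≤ C / 2 / 2 ^ n) :
    ∃ F : X → β, Continuous F ∧ ∀ x, Tendsto (fun n => u n x) atTop (𝓝 (F x)) := by
  choose F hF using fun x => cauchySeq_tendsto_of_complete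
    (cauchySeq_of_le_geometric_two (C := C) fun n => hdist n x)
  have hC : Tendsto (fun n : ℕ => C / 2 ^ n) atTop (𝓝 0) :=
    tendsto_const_nhds.div_atTop (tendsto_pow_atTop_atTop_of_one_lt one_lt_two)
  have hunif : TendstoUniformly u F atTop := by
    refine Metric.tendstoUniformly_iff.2 fun ε hε => ?_
    filter_upwards [hC.eventually (gt_mem_nhds hε)] with n hn x
    rw [dist_comm]
    exact (dist_le_of_le_geometric_two_of_tendsto (fun n => hdist n x) (hF x) n).trans_lt hn
  exact ⟨F, hunif.continuous (Frequently.of_forall hu), hF⟩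

section Insertion

variable {X : Type*} [TopologicalSpace X] [NormalSpace X] [ParacompactSpace X]

theorem exists_continuous_forall_lt_lt {G H : X → ℝ} (hG : UpperSemicontinuous G)
    (hH : LowerSemicontinuous H) (hGH : ∀ x, G x < H x) :
    ∃ f : C(X, ℝ), ∀ x, G x < f x ∧ f x < H x :=
  exists_continuous_forall_mem_convex_of_local_const (t := fun x => Ioo (G x) (H x))
    (fun _ => convex_Ioo _ _) fun x =>
      let ⟨c, hGc, hcH⟩ := exists_between (hGH x)
      ⟨c, (hG x c hGc).and (hH x c hcH)⟩

theorem exists_continuous_forall_sub_lt_lt_add {G H : X → ℝ} (hG : UpperSemicontinuous G)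
    (hH : LowerSemicontinuous H) (hGH : ∀ x, G x ≤ H x) {ε : ℝ} (hε : 0 < ε) :
    ∃ f : C(X, ℝ), ∀ x, G x - ε < f x ∧ f x < H x + ε := by
  have hG' : UpperSemicontinuous fun x => G x - ε := by
    simpa only [sub_eq_add_neg] using hG.add (continuous_const (y := -ε)).upperSemicontinuous
  have hH' : LowerSemicontinuous fun x => H x + ε :=
    hH.add (continuous_const (y := ε)).lowerSemicontinuous
  exact exists_continuous_forall_lt_lt hG' hH' fun x => by linarith [hGH x]

end Insertion

structure SemicontinuousPair (X : Type*) [TopologicalSpace X] where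
  lower : X → ℝ
  upper : X → ℝ
  upperSemicontinuous_lower : UpperSemicontinuous lower
  lowerSemicontinuous_upper : LowerSemicontinuous upper
  lower_le_upper : ∀ x, lower x ≤ upper x

namespace SemicontinuousPair

variable {X : Type*} [TopologicalSpace X] [NormalSpace X] [ParacompactSpace X]
  (p : SemicontinuousPair X) (n : ℕ)

noncomputable def approx : C(X, ℝ) :=
  (exists_continuous_forall_sub_lt_lt_add p.upperSemicontinuous_lower
    p.lowerSemicontinuous_upper p.lower_le_upper (ε := 1 / 2 ^ n) (by positivity)).choose

theorem approx_mem_Ioo (x : X) :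
    p.approx n x ∈ Ioo (p.lower x - 1 / 2 ^ n) (p.upper x + 1 / 2 ^ n) :=
  (exists_continuous_forall_sub_lt_lt_add p.upperSemicontinuous_lower
    p.lowerSemicontinuous_upper p.lower_le_upper (ε := 1 / 2 ^ n) (by positivity)).choose_spec x

noncomputable def tighten : SemicontinuousPair X where
  lower x := p.lower x ⊔ (p.approx n x - 1 / 2 ^ n)
  upper x := p.upper x ⊓ (p.approx n x + 1 / 2 ^ n)
  upperSemicontinuous_lower :=
    p.upperSemicontinuous_lower.sup
      ((p.approx n).continuous.sub continuous_const).upperSemicontinuous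
  lowerSemicontinuous_upper :=
    p.lowerSemicontinuous_upper.inf
      ((p.approx n).continuous.add continuous_const).lowerSemicontinuous
  lower_le_upper x := by
    obtain ⟨hlo, hhi⟩ := p.approx_mem_Ioo n x
    have hε : (0 : ℝ) < 1 / 2 ^ n := by positivity
    simp only [sup_le_iff, le_inf_iff]
    refine ⟨⟨p.lower_le_upper x, ?_⟩, ?_, ?_⟩ <;> linarith

noncomputable def iterate : ℕ → SemicontinuousPair X
  | 0 => p
  | n + 1 => (iterate n).tighten n

theorem lower_le_iterate_lower (x : X) : p.lower x ≤ (p.iterate n).lower x := by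
  induction n with
  | zero => rfl
  | succ n ih => exact ih.trans le_sup_left

theorem iterate_upper_le_upper (x : X) : (p.iterate n).upper x ≤ p.upper x := by
  induction n with
  | zero => rfl
  | succ n ih => exact inf_le_left.trans ih

theorem dist_approx_iterate_succ_le (x : X) :
    dist ((p.iterate n).approx n x) ((p.iterate (n + 1)).approx (n + 1) x) ≤ 4 / 2 / 2 ^ n := by
  obtain ⟨hlo, hhi⟩ := (p.iterate (n + 1)).approx_mem_Ioo (n + 1) x
  have hlower : (p.iterate n).approx n x - 1 / 2 ^ n ≤ (p.iterate (n + 1)).lower x := le_sup_right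
  have hupper : (p.iterate (n + 1)).upper x ≤ (p.iterate n).approx n x + 1 / 2 ^ n := inf_le_right
  have hε : (1 : ℝ) / 2 ^ (n + 1) ≤ 1 / 2 ^ n :=
    one_div_pow_le_one_div_pow_of_le one_le_two n.le_succ
  rw [Real.dist_eq, abs_le]
  constructor <;> linarith [show (4 : ℝ) / 2 / 2 ^ n = 2 * (1 / 2 ^ n) by ring]

end SemicontinuousPair

theorem exists_continuous_forall_le_le {X : Type*} [TopologicalSpace X] [NormalSpace X]
    [ParacompactSpace X] {G H : X → ℝ} (hG : UpperSemicontinuous G) (hH : LowerSemicontinuous H)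
    (hGH : ∀ x, G x ≤ H x) : ∃ f : X → ℝ, Continuous f ∧ ∀ x, G x ≤ f x ∧ f x ≤ H x := by
  let p : SemicontinuousPair X := ⟨G, H, hG, hH, hGH⟩
  obtain ⟨F, hFc, hF⟩ := exists_continuous_tendsto_of_dist_le_geometric_two
    (u := fun n => (p.iterate n).approx n) (fun n => ((p.iterate n).approx n).continuous)
    p.dist_approx_iterate_succ_le
  have hε : Tendsto (fun n : ℕ => (1 : ℝ) / 2 ^ n) atTop (𝓝 0) :=
    tendsto_const_nhds.div_atTop (tendsto_pow_atTop_atTop_of_one_lt one_lt_two)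
  refine ⟨F, hFc, fun x => ⟨?_, ?_⟩⟩
  · refine le_of_tendsto_of_tendsto (by simpa only [sub_zero] using tendsto_const_nhds.sub hε)
      (hF x) (Eventually.of_forall fun n => ?_)
    linarith [p.lower_le_iterate_lower n x, ((p.iterate n).approx_mem_Ioo n x).1]
  · refine le_of_tendsto_of_tendsto (hF x)
      (by simpa only [add_zero] using tendsto_const_nhds.add hε) (Eventually.of_forall fun n => ?_)
    linarith [p.iterate_upper_le_upper n x, ((p.iterate n).approx_mem_Ioo n x).2]

theorem stmt13 (g h : ℝ → ℝ) (hg : UpperSemicontinuous g) (hh : LowerSemicontinuous h)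
    (hgh : ∀ y, g y ≤ h y) :
    ∃ f : ℝ → ℝ, Continuous f ∧ ∀ y, g y ≤ f y ∧ f y ≤ h y :=
  exists_continuous_forall_le_le hg hh hgh
end

section
/- Let X be a topological space, A ⊆ X a connected subset, and U_1,…,U_m open subsets of X covering A such that the nerve graph N (with vertex set {1,…,m} and i adjacent to j iff i ≠ j and U_i ∩ U_j ≠ ∅) is a tree. If A ∩ U_i ≠ ∅ and A ∩ U_j ≠ ∅, then A ∩ U_k ≠ ∅ for every vertex k lying on the (unique) path from i to j in N. -/
/-!
Let `S` be the set of indices `i` with `A ∩ U i` nonempty. If the nerve restricted to `S` split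
into two parts with no edge between them, the unions of the `U i` over the two parts would be
disjoint on `A`, open, cover `A` and both meet `A`, contradicting preconnectedness. So `S` spans
a connected subgraph of the nerve, and in a tree the unique path between two vertices of a
connected subgraph stays inside it.
-/

namespace SimpleGraph

theorem IsAcyclic.support_subset_of_isPath {V : Type*} {G : SimpleGraph V} (hG : G.IsAcyclic)
    {u v : V} {p : G.Walk u v} (hp : p.IsPath) (q : G.Walk u v) : p.support ⊆ q.support := by
  classical
  have hpq : p = q.bypass :=
    congrArg Subtype.val ((hG.subsingleton_path u v).elim ⟨p, hp⟩ ⟨_, q.bypass_isPath⟩)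
  exact hpq ▸ q.support_bypass_subset_support

theorem IsAcyclic.support_subset_of_preconnected_induce {V : Type*} {G : SimpleGraph V}
    (hG : G.IsAcyclic) {s : Set V} (hs : (G.induce s).Preconnected) (a b : s)
    {p : G.Walk a b} (hp : p.IsPath) : ∀ x ∈ p.support, x ∈ s := by
  obtain ⟨q⟩ := hs a b
  have hq : ∀ x ∈ (q.map (Embedding.induce s).toHom).support, x ∈ s := by
    rw [Walk.support_map]
    rintro _ hx
    obtain ⟨y, -, rfl⟩ := List.mem_map.1 hx
    exact y.2
  exact fun x hx => hq x (hG.support_subset_of_isPath hp _ hx)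

end SimpleGraph

def nerveGraph {ι X : Type*} (U : ι → Set X) : SimpleGraph ι :=
  SimpleGraph.fromRel fun i j => (U i ∩ U j).Nonempty

theorem IsPreconnected.preconnected_induce_nerveGraph {ι X : Type*} [TopologicalSpace X]
    {A : Set X} (hA : IsPreconnected A) {U : ι → Set X} (hopen : ∀ i, IsOpen (U i))
    (hcover : A ⊆ ⋃ i, U i) :
    ((nerveGraph U).induce {i | (A ∩ U i).Nonempty}).Preconnected := by
  set S := {i | (A ∩ U i).Nonempty}
  intro a b
  by_contra hab
  set C : Set S := {v | ((nerveGraph U).induce S).Reachable a v}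
  set V : Set X := ⋃ v ∈ C, U v
  set W : Set X := ⋃ v ∈ Cᶜ, U v
  have hcov : A ⊆ V ∪ W := by
    intro x hx
    obtain ⟨_, ⟨v, rfl⟩, hxv⟩ := hcover hx
    let w : S := ⟨v, x, hx, hxv⟩
    by_cases hw : w ∈ C
    · exact Or.inl (Set.mem_biUnion hw hxv)
    · exact Or.inr (Set.mem_biUnion hw hxv)
  have haV : (A ∩ V).Nonempty := by
    obtain ⟨x, hxA, hxa⟩ := a.2
    exact ⟨x, hxA, Set.mem_biUnion (show a ∈ C from .rfl) hxa⟩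
  have hbW : (A ∩ W).Nonempty := by
    obtain ⟨x, hxA, hxb⟩ := b.2
    exact ⟨x, hxA, Set.mem_biUnion (show b ∈ Cᶜ from hab) hxb⟩
  obtain ⟨x, -, hxV, hxW⟩ := hA V W (isOpen_biUnion fun v _ => hopen v)
    (isOpen_biUnion fun v _ => hopen v) hcov haV hbW
  obtain ⟨v, hvC, hxv⟩ := Set.mem_iUnion₂.1 hxV
  obtain ⟨w, hwC, hxw⟩ := Set.mem_iUnion₂.1 hxW
  have hvw : v ≠ w := by rintro rfl; exact hwC hvC
  have hadj : ((nerveGraph U).induce S).Adj v w :=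
    SimpleGraph.induce_adj.2 <|
      (SimpleGraph.fromRel_adj _ _ _).2 ⟨Subtype.coe_injective.ne hvw, Or.inl ⟨x, hxv, hxw⟩⟩
  exact hwC (hvC.trans hadj.reachable)

theorem stmt16 {X : Type*} [TopologicalSpace X] (A : Set X) (hA : IsPreconnected A)
    (m : ℕ) (U : Fin m → Set X) (hopen : ∀ i, IsOpen (U i)) (hcover : A ⊆ ⋃ i, U i)
    (htree : (SimpleGraph.fromRel fun i j : Fin m => (U i ∩ U j).Nonempty).IsTree)
    (i j : Fin m) (hi : (A ∩ U i).Nonempty) (hj : (A ∩ U j).Nonempty) (k : Fin m)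
    (p : (SimpleGraph.fromRel fun i j : Fin m => (U i ∩ U j).Nonempty).Walk i j)
    (hp : p.IsPath) (hk : k ∈ p.support) :
    (A ∩ U k).Nonempty :=
  htree.isAcyclic.support_subset_of_preconnected_induce
    (hA.preconnected_induce_nerveGraph hopen hcover) ⟨i, hi⟩ ⟨j, hj⟩ hp k hk
end
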